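/- For every n ≥ 1, full-rank lattice L ⊆ ℝⁿ, s > 0, and x ∈ ℝⁿ: s² · (1 − ρ_s(L − x)/ρ_s(L)) ≤ π · dist(x, L)². -/

import Mathlib

open Metric Submodule
noncomputable section

/-- The Gaussian mass `ρ_s(A) = Σ_{a ∈ A} exp(−π‖a/s‖²)` of a set `A`. -/
def gMass {E : Type*} [NormedAddCommGroup E] (s : ℝ) (A : Set E) : ℝ :=
  ∑' a : A, Real.exp (-Real.pi * (‖(a : E)‖ / s) ^ 2)

/-
Let `w` be a lattice point closest to `x` and `y = x - w`, so `‖y‖ = dist(x, L)` and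
`ρ_s(L - x) = ρ_s(L - y)`. Pairing `v` with `-v` and applying the parallelogram law,
`ρ_s(v - y) ρ_s(v + y) = (ρ_s(v) ρ_s(y))²`, so by AM-GM `ρ_s(L - y) ≥ ρ_s(y) ρ_s(L)`.
Hence `1 - ρ_s(L - x)/ρ_s(L) ≤ 1 - exp(-π‖y‖²/s²) ≤ π‖y‖²/s²`.
-/

open Real

lemma two_mul_exp_midpoint_le_exp_add_exp (p q : ℝ) : 2 * exp ((p + q) / 2) ≤ exp p + exp q := by
  have h := convexOn_exp.2 (Set.mem_univ p) (Set.mem_univ q) (by norm_num : (0 : ℝ) ≤ 1 / 2)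
    (by norm_num : (0 : ℝ) ≤ 1 / 2) (by norm_num)
  simp only [smul_eq_mul] at h
  rw [show (p + q) / 2 = 1 / 2 * p + 1 / 2 * q by ring]
  linarith

lemma exp_neg_le_factorial_div_pow {u : ℝ} (hu : 0 < u) (k : ℕ) :
    exp (-u) ≤ k.factorial / u ^ k := by
  rw [exp_neg, ← inv_div]
  exact inv_anti₀ (by positivity) (pow_div_factorial_le_exp u hu.le k)

section InnerProductSpace

variable {E : Type*} [NormedAddCommGroup E] [InnerProductSpace ℝ E]

lemma two_mul_exp_neg_mul_norm_sq_mul_le (c : ℝ) (v y : E) :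
    2 * (exp (-c * ‖y‖ ^ 2) * exp (-c * ‖v‖ ^ 2)) ≤
      exp (-c * ‖v - y‖ ^ 2) + exp (-c * ‖v + y‖ ^ 2) := by
  rw [← exp_add]
  convert two_mul_exp_midpoint_le_exp_add_exp (-c * ‖v - y‖ ^ 2) (-c * ‖v + y‖ ^ 2) using 3
  linear_combination (c / 2) * parallelogram_law_with_norm ℝ v y

lemma exp_neg_mul_norm_sq_mul_tsum_le_tsum_sub (L : Submodule ℤ E) (c : ℝ) (y : E)
    (hG : Summable fun v : L => exp (-c * ‖(v : E)‖ ^ 2))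
    (hF : Summable fun v : L => exp (-c * ‖(v : E) - y‖ ^ 2)) :
    exp (-c * ‖y‖ ^ 2) * ∑' v : L, exp (-c * ‖(v : E)‖ ^ 2) ≤
      ∑' v : L, exp (-c * ‖(v : E) - y‖ ^ 2) := by
  set F : L → ℝ := fun v => exp (-c * ‖(v : E) - y‖ ^ 2)
  have hF_neg : ∀ v : L, F (-v) = exp (-c * ‖(v : E) + y‖ ^ 2) := fun v => by
    simp only [F, NegMemClass.coe_neg, ← norm_neg ((v : E) + y), neg_add']
  have hF_neg_summable : Summable fun v => F (-v) := (Equiv.neg L).summable_iff.2 hF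
  have hF_neg_tsum : ∑' v, F (-v) = ∑' v, F v := (Equiv.neg L).tsum_eq F
  suffices 2 * (exp (-c * ‖y‖ ^ 2) * ∑' v : L, exp (-c * ‖(v : E)‖ ^ 2)) ≤ 2 * ∑' v, F v by
    linarith
  calc 2 * (exp (-c * ‖y‖ ^ 2) * ∑' v : L, exp (-c * ‖(v : E)‖ ^ 2))
      = ∑' v : L, 2 * (exp (-c * ‖y‖ ^ 2) * exp (-c * ‖(v : E)‖ ^ 2)) := by
        rw [tsum_mul_left, tsum_mul_left]
    _ ≤ ∑' v, (F v + F (-v)) :=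
        Summable.tsum_le_tsum
          (fun v => (hF_neg v).symm ▸ two_mul_exp_neg_mul_norm_sq_mul_le c (v : E) y)
          ((hG.mul_left _).mul_left 2) (hF.add hF_neg_summable)
    _ = 2 * ∑' v, F v := by
        rw [hF.tsum_add hF_neg_summable, hF_neg_tsum, two_mul]

end InnerProductSpace

namespace ZLattice

section NormedSpace

variable {E : Type*} [NormedAddCommGroup E] [NormedSpace ℝ E] [FiniteDimensional ℝ E]
  (L : Submodule ℤ E) [DiscreteTopology L]

lemma summable_exp_neg_mul_norm_sub_sq {c : ℝ} (hc : 0 < c) (x : E) :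
    Summable fun v : L => exp (-c * ‖(v : E) - x‖ ^ 2) := by
  set k := Module.finrank ℤ L + 1
  have hx : {v : L | (v : E) = x}.Finite :=
    Set.Subsingleton.finite fun v hv w hw => Subtype.ext (hv.trans hw.symm)
  refine .of_norm_bounded_eventually
    ((summable_norm_sub_inv_pow L (2 * k) (by omega) x).mul_left (k.factorial / c ^ k)) ?_
  filter_upwards [hx.eventually_cofinite_notMem] with v hv
  have hv : 0 < ‖(v : E) - x‖ := norm_pos_iff.2 (sub_ne_zero.2 hv)
  rw [norm_of_nonneg (exp_pos _).le, neg_mul]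
  calc exp (-(c * ‖(v : E) - x‖ ^ 2)) ≤ k.factorial / (c * ‖(v : E) - x‖ ^ 2) ^ k :=
        exp_neg_le_factorial_div_pow (by positivity) k
    _ = k.factorial / c ^ k * ‖(v : E) - x‖⁻¹ ^ (2 * k) := by
        rw [mul_pow, ← pow_mul, inv_pow]
        field_simp

end NormedSpace

section InnerProductSpace

variable {E : Type*} [NormedAddCommGroup E] [InnerProductSpace ℝ E] [FiniteDimensional ℝ E]
  (L : Submodule ℤ E) [DiscreteTopology L]

lemma exp_neg_mul_infDist_sq_mul_tsum_le {c : ℝ} (hc : 0 < c) (x : E) :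
    exp (-c * infDist x (L : Set E) ^ 2) * ∑' v : L, exp (-c * ‖(v : E)‖ ^ 2) ≤
      ∑' v : L, exp (-c * ‖(v : E) - x‖ ^ 2) := by
  have hclosed : IsClosed (L : Set E) :=
    @AddSubgroup.isClosed_of_discrete _ _ _ _ _ L.toAddSubgroup
      (inferInstanceAs (DiscreteTopology L))
  obtain ⟨w, hw, hdist⟩ := hclosed.exists_infDist_eq_dist ⟨0, L.zero_mem⟩ x
  have htranslate : ∑' v : L, exp (-c * ‖(v : E) - x‖ ^ 2) =
      ∑' v : L, exp (-c * ‖(v : E) - (x - w)‖ ^ 2) := by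
    rw [← (Equiv.addRight (⟨w, hw⟩ : L)).tsum_eq]
    simp only [Equiv.coe_addRight, coe_add, sub_sub_eq_add_sub]
  rw [htranslate, hdist, dist_eq_norm]
  refine exp_neg_mul_norm_sq_mul_tsum_le_tsum_sub L c (x - w) ?_
    (summable_exp_neg_mul_norm_sub_sq L hc _)
  simpa using summable_exp_neg_mul_norm_sub_sq L hc 0

end InnerProductSpace

end ZLattice

lemma gMass_eq_tsum {E : Type*} [NormedAddCommGroup E] (s : ℝ) (A : Set E) :
    gMass s A = ∑' a : A, exp (-(π / s ^ 2) * ‖(a : E)‖ ^ 2) := by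
  unfold gMass
  congr 1 with a
  ring_nf

lemma gMass_image_sub {E : Type*} [NormedAddCommGroup E] (s : ℝ) (A : Set E) (x : E) :
    gMass s ((· - x) '' A) = ∑' a : A, exp (-(π / s ^ 2) * ‖(a : E) - x‖ ^ 2) := by
  rw [gMass_eq_tsum,
    tsum_image (fun a : E => exp (-(π / s ^ 2) * ‖a‖ ^ 2)) sub_left_injective.injOn]

theorem gaussian_norm_le_pi_dist_sq
    (n : ℕ)
    (L : Submodule ℤ (EuclideanSpace ℝ (Fin n))) [DiscreteTopology L]
    (s : ℝ) (hs : 0 < s) (x : EuclideanSpace ℝ (Fin n)) :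
    s ^ 2 * (1 - gMass s ((fun v => v - x) '' (L : Set (EuclideanSpace ℝ (Fin n))))
        / gMass s (L : Set (EuclideanSpace ℝ (Fin n))))
      ≤ Real.pi * Metric.infDist x (L : Set (EuclideanSpace ℝ (Fin n))) ^ 2 := by
  set c := π / s ^ 2
  set d := infDist x (L : Set (EuclideanSpace ℝ (Fin n)))
  have hc : 0 < c := by positivity
  have hmass_pos : 0 < ∑' v : L, exp (-c * ‖(v : EuclideanSpace ℝ (Fin n))‖ ^ 2) :=
    (by simpa using ZLattice.summable_exp_neg_mul_norm_sub_sq L hc 0 : Summable _).tsum_pos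
      (fun _ => (exp_pos _).le) 0 (exp_pos _)
  have hratio : exp (-c * d ^ 2) ≤
      gMass s ((fun v => v - x) '' (L : Set (EuclideanSpace ℝ (Fin n)))) /
        gMass s (L : Set (EuclideanSpace ℝ (Fin n))) := by
    rw [gMass_image_sub, gMass_eq_tsum]
    exact (le_div_iff₀ hmass_pos).2 (ZLattice.exp_neg_mul_infDist_sq_mul_tsum_le L hc x)
  calc s ^ 2 * (1 - _ / _) ≤ s ^ 2 * (c * d ^ 2) := by
        gcongr
        linarith [add_one_le_exp (-c * d ^ 2)]
    _ = π * d ^ 2 := by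
        simp only [c]
        field_simp
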